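/- Let ζ = 2cos(2π/13) + 2cos(10π/13) and ζ′ = 2cos(4π/13) + 2cos(6π/13). Then (7−5ζ′)² + (12+5ζ+5ζ′)² + (7−5ζ)² + 1183 + 100·((1+ζ+2ζ′)² + (1+2ζ+ζ′)² + (ζ′−ζ)²) = 4225. -/
import Mathlib


open Real

private lemma two_cos_mul_cos (a b : ℝ) :
    2 * Real.cos a * Real.cos b = Real.cos (a + b) + Real.cos (a - b) := by
  rw [Real.cos_add, Real.cos_sub]; ring

private lemma two_sin_mul_cos (a b : ℝ) :
    2 * Real.sin a * Real.cos b = Real.sin (b + a) - Real.sin (b - a) := by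
  rw [Real.sin_add, Real.sin_sub]; ring

theorem stmt_12
    (ζ ζ' : ℝ)
    (hζ : ζ = 2 * Real.cos (2 * π / 13) + 2 * Real.cos (10 * π / 13))
    (hζ' : ζ' = 2 * Real.cos (4 * π / 13) + 2 * Real.cos (6 * π / 13)) :
    (7 - 5 * ζ') ^ 2 + (12 + 5 * ζ + 5 * ζ') ^ 2 + (7 - 5 * ζ) ^ 2 + 1183 +
        100 * ((1 + ζ + 2 * ζ') ^ 2 + (1 + 2 * ζ + ζ') ^ 2 + (ζ' - ζ) ^ 2) =
      4225 := by
  set x1 := Real.cos (2 * π / 13) with hx1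
  set x2 := Real.cos (4 * π / 13) with hx2
  set x3 := Real.cos (6 * π / 13) with hx3
  set x4 := Real.cos (8 * π / 13) with hx4
  set x5 := Real.cos (10 * π / 13) with hx5
  set x6 := Real.cos (12 * π / 13) with hx6
  -- reductions of larger angles
  have h7 : Real.cos (14 * π / 13) = x6 := by
    rw [hx6, show (14 : ℝ) * π / 13 = 2 * π - 12 * π / 13 by ring, Real.cos_two_pi_sub]
  have h8 : Real.cos (16 * π / 13) = x5 := by
    rw [hx5, show (16 : ℝ) * π / 13 = 2 * π - 10 * π / 13 by ring, Real.cos_two_pi_sub]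
  have h10 : Real.cos (20 * π / 13) = x3 := by
    rw [hx3, show (20 : ℝ) * π / 13 = 2 * π - 6 * π / 13 by ring, Real.cos_two_pi_sub]
  -- product identities
  have p11 : 2 * x1 * x1 = x2 + 1 := by
    have := two_cos_mul_cos (2 * π / 13) (2 * π / 13)
    rw [show (2:ℝ) * π / 13 + 2 * π / 13 = 4 * π / 13 by ring,
      show (2:ℝ) * π / 13 - 2 * π / 13 = 0 by ring, Real.cos_zero] at this
    simpa using this
  have p22 : 2 * x2 * x2 = x4 + 1 := by
    have := two_cos_mul_cos (4 * π / 13) (4 * π / 13)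
    rw [show (4:ℝ) * π / 13 + 4 * π / 13 = 8 * π / 13 by ring,
      show (4:ℝ) * π / 13 - 4 * π / 13 = 0 by ring, Real.cos_zero] at this
    simpa using this
  have p33 : 2 * x3 * x3 = x6 + 1 := by
    have := two_cos_mul_cos (6 * π / 13) (6 * π / 13)
    rw [show (6:ℝ) * π / 13 + 6 * π / 13 = 12 * π / 13 by ring,
      show (6:ℝ) * π / 13 - 6 * π / 13 = 0 by ring, Real.cos_zero] at this
    simpa using this
  have p55 : 2 * x5 * x5 = x3 + 1 := by
    have := two_cos_mul_cos (10 * π / 13) (10 * π / 13)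
    rw [show (10:ℝ) * π / 13 + 10 * π / 13 = 20 * π / 13 by ring,
      show (10:ℝ) * π / 13 - 10 * π / 13 = 0 by ring, Real.cos_zero, h10] at this
    simpa using this
  have p12 : 2 * x1 * x2 = x3 + x1 := by
    have := two_cos_mul_cos (2 * π / 13) (4 * π / 13)
    rw [show (2:ℝ) * π / 13 + 4 * π / 13 = 6 * π / 13 by ring,
      show (2:ℝ) * π / 13 - 4 * π / 13 = -(2 * π / 13) by ring, Real.cos_neg] at this
    simpa using this
  have p13 : 2 * x1 * x3 = x4 + x2 := by
    have := two_cos_mul_cos (2 * π / 13) (6 * π / 13)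
    rw [show (2:ℝ) * π / 13 + 6 * π / 13 = 8 * π / 13 by ring,
      show (2:ℝ) * π / 13 - 6 * π / 13 = -(4 * π / 13) by ring, Real.cos_neg] at this
    simpa using this
  have p15 : 2 * x1 * x5 = x6 + x4 := by
    have := two_cos_mul_cos (2 * π / 13) (10 * π / 13)
    rw [show (2:ℝ) * π / 13 + 10 * π / 13 = 12 * π / 13 by ring,
      show (2:ℝ) * π / 13 - 10 * π / 13 = -(8 * π / 13) by ring, Real.cos_neg] at this
    simpa using this
  have p23 : 2 * x2 * x3 = x5 + x1 := by
    have := two_cos_mul_cos (4 * π / 13) (6 * π / 13)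
    rw [show (4:ℝ) * π / 13 + 6 * π / 13 = 10 * π / 13 by ring,
      show (4:ℝ) * π / 13 - 6 * π / 13 = -(2 * π / 13) by ring, Real.cos_neg] at this
    simpa using this
  have p25 : 2 * x2 * x5 = x6 + x3 := by
    have := two_cos_mul_cos (4 * π / 13) (10 * π / 13)
    rw [show (4:ℝ) * π / 13 + 10 * π / 13 = 14 * π / 13 by ring,
      show (4:ℝ) * π / 13 - 10 * π / 13 = -(6 * π / 13) by ring, Real.cos_neg, h7] at this
    simpa using this
  have p35 : 2 * x3 * x5 = x5 + x2 := by
    have := two_cos_mul_cos (6 * π / 13) (10 * π / 13)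
    rw [show (6:ℝ) * π / 13 + 10 * π / 13 = 16 * π / 13 by ring,
      show (6:ℝ) * π / 13 - 10 * π / 13 = -(4 * π / 13) by ring, Real.cos_neg, h8] at this
    simpa using this
  -- sum of the six cosines is -1/2, by telescoping
  have hs : Real.sin (π / 13) > 0 := by
    apply Real.sin_pos_of_pos_of_lt_pi
    · positivity
    · nlinarith [Real.pi_pos]
  have tele : ∀ k : ℝ, 2 * Real.sin (π / 13) * Real.cos (2 * k * π / 13)
      = Real.sin ((2 * k + 1) * π / 13) - Real.sin ((2 * k - 1) * π / 13) := by
    intro k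
    have := two_sin_mul_cos (π / 13) (2 * k * π / 13)
    rw [show 2 * k * π / 13 + π / 13 = (2 * k + 1) * π / 13 by ring,
      show 2 * k * π / 13 - π / 13 = (2 * k - 1) * π / 13 by ring] at this
    exact this
  have t1 := tele 1
  have t2 := tele 2
  have t3 := tele 3
  have t4 := tele 4
  have t5 := tele 5
  have t6 := tele 6
  norm_num at t1 t2 t3 t4 t5 t6
  rw [← hx1] at t1; rw [← hx2] at t2; rw [← hx3] at t3
  rw [← hx4] at t4; rw [← hx5] at t5; rw [← hx6] at t6
  have hsum : x1 + x2 + x3 + x4 + x5 + x6 = -1/2 := by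
    have key : 2 * Real.sin (π / 13) * (x1 + x2 + x3 + x4 + x5 + x6)
        = 2 * Real.sin (π / 13) * (-1/2) := by
      linarith [t1, t2, t3, t4, t5, t6]
    exact mul_left_cancel₀ (by positivity) key
  subst hζ hζ'
  linear_combination 1300 * (p11 + p22 + p33 + p55 + p12 + p13 + p25 + p35) + 2600 * (p15 + p23) + 5200 * hsum
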